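/- arXiv:1004.1086 — 2 statements merged into one kernel-verified Lean document; each statement's English description precedes it below -/
import Mathlib

section
/- Let n ≥ 2 and let H be an n × n real matrix with entries in {±1}, satisfying H Hᵀ = n·I, whose first row (row index 0) consists solely of 1s. Define e_i = (1/√(n−1)) · (H(j,i))_{1 ≤ j ≤ n−1} ∈ ℝ^{n−1} for 0 ≤ i ≤ n−1. Then (e_i)_{i=0}^{n−1} is a Grassmannian frame for ℝ^{n−1}: it is a unit-norm frame with max_{i₁ < i₂} |⟨e_{i₁}, e_{i₂}⟩| = 1/(n−1), and every unit-norm frame (f_i)_{i=0}^{n−1} of n vectors in ℝ^{n−1} satisfies max_{i₁ < i₂} |⟨f_{i₁}, f_{i₂}⟩| ≥ 1/(n−1). -/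
open scoped InnerProductSpace Matrix
open Finset

/-!
Writing `K` for `H` with its first row removed, `e i` is the `i`-th column of `K / √(n-1)`.
Rows of a Hadamard matrix are orthogonal, so `K Kᵀ = n • 1` and the columns of `K` span;
columns are orthogonal as well, and removing the all-ones row gives `Kᵀ K = n • 1 - J`, whence
`⟪e i, e j⟫ = -1/(n-1)` for `i ≠ j`.

Optimality is the Welch bound: for unit vectors `f₁, …, f_N` in dimension `d`, the frame
operator `S = ∑ fᵢ fᵢᵀ` has trace `N`, and `tr S² = ∑ᵢⱼ ⟪fᵢ, fⱼ⟫²` is at least `(tr S)² / d`, so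
`N² ≤ d (N + N (N-1) μ²)`; for `N = d + 1` this reads `μ ≥ 1/d`.
-/

noncomputable def maxCorrelation {ι E : Type*} [LinearOrder ι] [Inner ℝ E] (f : ι → E) : ℝ :=
  ⨆ i₁, ⨆ i₂, ⨆ (_ : i₁ < i₂), |⟪f i₁, f i₂⟫_ℝ|

section MaxCorrelation

variable {ι E : Type*} [LinearOrder ι] [NormedAddCommGroup E] [InnerProductSpace ℝ E]

theorem maxCorrelation_nonneg (f : ι → E) : 0 ≤ maxCorrelation f :=
  Real.iSup_nonneg fun _ => Real.iSup_nonneg fun _ => Real.iSup_nonneg fun _ => abs_nonneg _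

theorem abs_inner_le_maxCorrelation [Finite ι] (f : ι → E) {i j : ι} (hij : i ≠ j) :
    |⟪f i, f j⟫_ℝ| ≤ maxCorrelation f := by
  wlog hlt : i < j generalizing i j
  · rw [real_inner_comm]
    exact this hij.symm (hij.lt_or_gt.resolve_left hlt)
  refine le_ciSup_of_le (Set.finite_range _).bddAbove i <|
    le_ciSup_of_le (Set.finite_range _).bddAbove j ?_
  rw [ciSup_pos hlt]

theorem maxCorrelation_le (f : ι → E) {c : ℝ} (hc : 0 ≤ c)
    (h : ∀ i j, i ≠ j → |⟪f i, f j⟫_ℝ| ≤ c) : maxCorrelation f ≤ c :=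
  Real.iSup_le (fun i => Real.iSup_le (fun j => Real.iSup_le (fun hij => h i j hij.ne) hc) hc) hc

theorem maxCorrelation_eq_of_abs_inner_eq [Finite ι] [Nontrivial ι] (f : ι → E) {c : ℝ}
    (h : ∀ i j, i ≠ j → |⟪f i, f j⟫_ℝ| = c) : maxCorrelation f = c := by
  obtain ⟨i, j, hij⟩ := exists_pair_ne ι
  refine le_antisymm (maxCorrelation_le f ?_ fun i j hij => (h i j hij).le) ?_
  · exact h i j hij ▸ abs_nonneg _
  · exact h i j hij ▸ abs_inner_le_maxCorrelation f hij

end MaxCorrelation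

section WelchBound

variable {ι : Type*} [Fintype ι]

theorem sq_sum_sum_sq_le_card_mul_sum_sum_sq {κ : Type*} [Fintype κ] (x : ι → κ → ℝ) :
    (∑ i, ∑ a, x i a ^ 2) ^ 2 ≤ Fintype.card κ * ∑ i, ∑ j, (∑ a, x i a * x j a) ^ 2 := by
  set T : κ → κ → ℝ := fun a b => ∑ i, x i a * x i b
  have htrace : ∑ i, ∑ a, x i a ^ 2 = ∑ a, T a a := by
    rw [sum_comm]; simp only [T, sq]
  have hgram : ∑ i, ∑ j, (∑ a, x i a * x j a) ^ 2 = ∑ a, ∑ b, T a b ^ 2 := by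
    simp_rw [T, sq, sum_mul_sum, sum_comm (s := (univ : Finset ι)) (t := (univ : Finset κ))]
    ac_rfl
  have hdiag : ∑ a, T a a ^ 2 ≤ ∑ a, ∑ b, T a b ^ 2 :=
    sum_le_sum fun a _ => single_le_sum (f := fun b => T a b ^ 2) (fun _ _ => sq_nonneg _)
      (mem_univ a)
  rw [htrace, hgram]
  calc (∑ a, T a a) ^ 2 ≤ Fintype.card κ * ∑ a, T a a ^ 2 := sq_sum_le_card_mul_sum_sq
    _ ≤ Fintype.card κ * ∑ a, ∑ b, T a b ^ 2 := by gcongr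

variable {E : Type*} [NormedAddCommGroup E] [InnerProductSpace ℝ E] [FiniteDimensional ℝ E]

theorem sq_sum_norm_sq_le_finrank_mul_sum_sum_inner_sq (f : ι → E) :
    (∑ i, ‖f i‖ ^ 2) ^ 2 ≤ Module.finrank ℝ E * ∑ i, ∑ j, ⟪f i, f j⟫_ℝ ^ 2 := by
  let b := stdOrthonormalBasis ℝ E
  have hinner (i j : ι) : ⟪f i, f j⟫_ℝ = ∑ a, ⟪f i, b a⟫_ℝ * ⟪f j, b a⟫_ℝ := by
    simp_rw [← b.sum_inner_mul_inner (f i) (f j), real_inner_comm (b _) (f j)]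
  have hnorm (i : ι) : ‖f i‖ ^ 2 = ∑ a, ⟪f i, b a⟫_ℝ ^ 2 := by
    rw [← real_inner_self_eq_norm_sq, hinner]; simp only [sq]
  simp_rw [hnorm, hinner]
  simpa using sq_sum_sum_sq_le_card_mul_sum_sum_sq fun i a => ⟪f i, b a⟫_ℝ

variable [LinearOrder ι]

theorem card_le_finrank_mul_maxCorrelation [Nonempty ι] {f : ι → E} (hf : ∀ i, ‖f i‖ = 1) :
    (Fintype.card ι : ℝ) ≤
      Module.finrank ℝ E * (1 + (Fintype.card ι - 1) * maxCorrelation f ^ 2) := by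
  set N : ℝ := (Fintype.card ι : ℝ)
  set μ := maxCorrelation f
  have hrow (i : ι) : ∑ j, ⟪f i, f j⟫_ℝ ^ 2 ≤ 1 + (N - 1) * μ ^ 2 := by
    have hoff : ∑ j ∈ univ.erase i, ⟪f i, f j⟫_ℝ ^ 2 ≤ ∑ j ∈ univ.erase i, μ ^ 2 :=
      sum_le_sum fun j hj => by
        rw [← sq_abs]
        gcongr
        exact abs_inner_le_maxCorrelation f (ne_of_mem_erase hj).symm
    rw [sum_const, card_erase_of_mem (mem_univ i), card_univ, nsmul_eq_mul,
      Nat.cast_pred Fintype.card_pos] at hoff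
    rw [← add_sum_erase _ _ (mem_univ i), real_inner_self_eq_norm_sq, hf i, one_pow]
    linarith
  refine le_of_mul_le_mul_left ?_ (by positivity : 0 < N)
  calc N * N = (∑ i, ‖f i‖ ^ 2) ^ 2 := by simp [hf, N, sq]
    _ ≤ Module.finrank ℝ E * ∑ i, ∑ j, ⟪f i, f j⟫_ℝ ^ 2 :=
      sq_sum_norm_sq_le_finrank_mul_sum_sum_inner_sq f
    _ ≤ Module.finrank ℝ E * ∑ _i : ι, (1 + (N - 1) * μ ^ 2) := by gcongr with i; exact hrow i
    _ = N * (Module.finrank ℝ E * (1 + (N - 1) * μ ^ 2)) := by simp [N]; ring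

theorem one_div_finrank_le_maxCorrelation {f : ι → E} (hf : ∀ i, ‖f i‖ = 1)
    (hcard : Fintype.card ι = Module.finrank ℝ E + 1) :
    1 / (Module.finrank ℝ E : ℝ) ≤ maxCorrelation f := by
  have : Nonempty ι := Fintype.card_pos_iff.mp (by omega)
  have hwelch := card_le_finrank_mul_maxCorrelation hf
  rw [hcard] at hwelch
  push_cast at hwelch
  have hμ := maxCorrelation_nonneg f
  rcases (Module.finrank ℝ E).eq_zero_or_pos with hd | hd
  · simpa [hd] using hμ
  have hd' : (0 : ℝ) < Module.finrank ℝ E := by exact_mod_cast hd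
  rw [div_le_iff₀ hd']
  nlinarith [mul_nonneg hd'.le hμ]

end WelchBound

namespace Matrix

theorem mul_eq_smul_one_comm {K m : Type*} [Field K] [Fintype m] [DecidableEq m]
    {A B : Matrix m m K} {c : K} (hc : c ≠ 0) : A * B = c • 1 ↔ B * A = c • 1 := by
  rw [← inv_smul_eq_iff₀ hc, ← Matrix.mul_smul, mul_eq_one_comm, smul_mul, inv_smul_eq_iff₀ hc]

theorem submatrix_mul_transpose_eq_smul_one {R l m n : Type*} [CommRing R] [Fintype n]
    [DecidableEq l] [DecidableEq m] {H : Matrix m n R} {c : R} (hH : H * Hᵀ = c • 1)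
    {r : l → m} (hr : Function.Injective r) :
    H.submatrix r id * (H.submatrix r id)ᵀ = c • 1 := by
  rw [transpose_submatrix, ← submatrix_mul _ _ _ _ _ Function.bijective_id, hH, submatrix_smul,
    Pi.smul_apply, Pi.smul_apply, submatrix_one _ hr]

theorem transpose_mul_submatrix_succ {R : Type*} [CommRing R] {m : ℕ}
    {H : Matrix (Fin (m + 1)) (Fin (m + 1)) R} {c : R} (hH : Hᵀ * H = c • 1)
    (hrow : ∀ k, H 0 k = 1) :
    (H.submatrix Fin.succ id)ᵀ * H.submatrix Fin.succ id = c • 1 - of fun _ _ => 1 := by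
  ext i j
  have hij := congrFun₂ hH i j
  rw [mul_apply, Fin.sum_univ_succ] at hij
  simp only [transpose_apply, hrow, mul_one] at hij
  simp only [← hij, sub_apply, of_apply, mul_apply, transpose_apply, submatrix_apply, id]
  ring

end Matrix

section ScaledColumns

variable {κ ι : Type*} [Fintype κ] {K : Matrix κ ι ℝ} {s : ℝ} {e : ι → EuclideanSpace ℝ κ}

theorem inner_eq_sq_mul_transpose_mul_apply (he : ∀ i a, e i a = s * K a i) (i j : ι) :
    ⟪e i, e j⟫_ℝ = s ^ 2 * (Kᵀ * K) i j := by
  simp only [PiLp.inner_apply, RCLike.inner_apply, conj_trivial, he, Matrix.mul_apply,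
    Matrix.transpose_apply, mul_sum]
  exact sum_congr rfl fun _ _ => by ring

theorem span_range_eq_top_of_mul_transpose_eq_smul_one [Fintype ι] [DecidableEq κ]
    (he : ∀ i a, e i a = s * K a i) (hs : s ≠ 0) {c : ℝ} (hc : c ≠ 0) (hK : K * Kᵀ = c • 1) :
    Submodule.span ℝ (Set.range e) = ⊤ := by
  refine Submodule.eq_top_iff'.mpr fun v => (Submodule.mem_span_range_iff_exists_fun ℝ).mpr
    ⟨fun i => (s * c)⁻¹ * (v.ofLp ᵥ* K) i, ?_⟩
  have hv : (v.ofLp ᵥ* K) ᵥ* Kᵀ = c • v.ofLp := by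
    rw [Matrix.vecMul_vecMul, hK, Matrix.vecMul_smul, Matrix.vecMul_one]
  ext b
  have hvb : ∑ i, (v.ofLp ᵥ* K) i * K b i = c * v b := congrFun hv b
  simp only [WithLp.ofLp_sum, WithLp.ofLp_smul, Finset.sum_apply, Pi.smul_apply, smul_eq_mul, he]
  calc ∑ i, (s * c)⁻¹ * (v.ofLp ᵥ* K) i * (s * K b i)
      = (s * c)⁻¹ * s * ∑ i, (v.ofLp ᵥ* K) i * K b i := by
        rw [mul_sum]; exact sum_congr rfl fun _ _ => by ring
    _ = v b := by rw [hvb]; field_simp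

end ScaledColumns

/-- The normalized truncated columns of a normalized `n × n` Hadamard matrix form
a Grassmannian frame for `ℝ^{n−1}`: they are a unit-norm frame with maximal frame
correlation `1/(n−1)`, and every unit-norm frame of `n` vectors in `ℝ^{n−1}` has
maximal frame correlation at least `1/(n−1)`. -/
theorem stmt_7 (n : ℕ) (hn : 2 ≤ n) (H : Matrix (Fin n) (Fin n) ℝ)
    (hHad : H * H.transpose = (n : ℝ) • 1)
    (hrow : ∀ k : Fin n, H ⟨0, by omega⟩ k = 1)
    (e : Fin n → EuclideanSpace ℝ (Fin (n - 1)))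
    (he : ∀ i : Fin n, ∀ j : Fin (n - 1),
      e i j = (1 / Real.sqrt ((n : ℝ) - 1)) * H ⟨j.val + 1, by omega⟩ i) :
    (∀ i : Fin n, ‖e i‖ = 1) ∧
      Submodule.span ℝ (Set.range e) = ⊤ ∧
      (⨆ i₁ : Fin n, ⨆ i₂ : Fin n, ⨆ (_ : i₁ < i₂), |(⟪e i₁, e i₂⟫_ℝ)|) =
        1 / ((n : ℝ) - 1) ∧
      (∀ f : Fin n → EuclideanSpace ℝ (Fin (n - 1)),
        (∀ i, ‖f i‖ = 1) → Submodule.span ℝ (Set.range f) = ⊤ →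
        1 / ((n : ℝ) - 1) ≤
          ⨆ i₁ : Fin n, ⨆ i₂ : Fin n, ⨆ (_ : i₁ < i₂), |(⟪f i₁, f i₂⟫_ℝ)|) := by
  obtain ⟨m, rfl⟩ : ∃ m, n = m + 1 := ⟨n - 1, by omega⟩
  have hm : (0 : ℝ) < m := by exact_mod_cast (by omega : 0 < m)
  have hsub : ((m + 1 : ℕ) : ℝ) - 1 = m := by push_cast; ring
  have hne : ((m + 1 : ℕ) : ℝ) ≠ 0 := by positivity
  rw [hsub] at he ⊢
  have : Nontrivial (Fin (m + 1)) := Fin.nontrivial_iff_two_le.mpr hn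
  let K : Matrix (Fin m) (Fin (m + 1)) ℝ := H.submatrix Fin.succ id
  have hcol : Kᵀ * K = ((m + 1 : ℕ) : ℝ) • 1 - .of fun _ _ => 1 :=
    Matrix.transpose_mul_submatrix_succ ((Matrix.mul_eq_smul_one_comm hne).mp hHad) hrow
  have hinner (i j : Fin (m + 1)) : ⟪e i, e j⟫_ℝ = if i = j then 1 else -(1 / (m : ℝ)) := by
    rw [inner_eq_sq_mul_transpose_mul_apply (K := K) he, hcol, div_pow, Real.sq_sqrt hm.le]
    split_ifs with hij
    · simp [hij]; field_simp
    · simp [hij]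
  refine ⟨fun i => ?_, ?_, ?_, fun f hf _ => ?_⟩
  · rw [← pow_eq_one_iff_of_nonneg (norm_nonneg _) two_ne_zero, ← real_inner_self_eq_norm_sq,
      hinner, if_pos rfl]
  · exact span_range_eq_top_of_mul_transpose_eq_smul_one (K := K) he (by positivity) hne
      (Matrix.submatrix_mul_transpose_eq_smul_one hHad (Fin.succ_injective _))
  · exact maxCorrelation_eq_of_abs_inner_eq e fun i j hij => by
      rw [hinner, if_neg hij, abs_neg, abs_of_pos (by positivity)]
  · simpa [maxCorrelation] using one_div_finrank_le_maxCorrelation hf (by simp)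
end

section
/- Let n > m ≥ 0 and define H(j,k) = (−1)^{b(j,k)} for j, k ∈ {0, …, 2ⁿ − 1}, where b(j,k) is the number of bit positions at which the binary expansions of j and k both have a 1. For 0 ≤ i ≤ 2^{n−m} − 1 and 0 ≤ r ≤ 2^m − 1, set e^i_r = (1/√(2ⁿ − 2^m)) · (H(j, i·2^m + r))_{2^m ≤ j ≤ 2ⁿ−1} ∈ ℝ^{2ⁿ−2^m}. Then for each fixed i, the family (e^i_r)_{r=0}^{2^m−1} is orthonormal; consequently the subspace W_i = span{e^i_r : 0 ≤ r ≤ 2^m − 1} of ℝ^{2ⁿ−2^m} has dimension 2^m. -/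
open scoped InnerProductSpace

/-- `bitOverlap j k` is the number of bit positions at which the binary
expansions of `j` and `k` both have a `1`. -/
def bitOverlap (j k : ℕ) : ℕ := (Nat.land j k).bits.count true

/-!
Write `χ_k(j) = (-1)^{b(j,k)}`. Pairing the rows `2q` and `2q+1` turns the inner product of the
columns `r` and `s` into `1 + (-1)^{r+s}` times that of the columns `⌊r/2⌋` and `⌊s/2⌋`, so by
induction distinct columns of the `2^N × 2^N` Sylvester matrix are orthogonal. The truncated inner
product of the columns `i 2^m + r` and `i 2^m + s` is the full one minus the sum over the rows
`j < 2^m`; on those rows `b(j, i 2^m + r) = b(j, r)`, so the subtracted sum is the inner product of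
the columns `r ≠ s` of the `2^m × 2^m` Sylvester matrix. Both vanish.
-/

open Finset

theorem Nat.count_true_bits_bit (b : Bool) (n : ℕ) :
    (Nat.bit b n).bits.count true = b.toNat + n.bits.count true := by
  rcases eq_or_ne n 0 with rfl | hn
  · cases b <;> simp [Nat.bit]
  · rw [Nat.bits_append_bit _ _ fun h => absurd h hn]
    cases b <;> simp [Nat.add_comm]

theorem bitOverlap_bit_left (b : Bool) (q k : ℕ) :
    bitOverlap (Nat.bit b q) k = (b && k.bodd).toNat + bitOverlap q k.div2 := by
  conv_lhs => rw [← Nat.bit_bodd_div2 k]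
  exact (congrArg (List.count true ∘ Nat.bits) (Nat.land_bit b q k.bodd k.div2)).trans
    (Nat.count_true_bits_bit _ _)

theorem bitOverlap_mod_two_pow_right {m j : ℕ} (hj : j < 2 ^ m) (k : ℕ) :
    bitOverlap j (k % 2 ^ m) = bitOverlap j k := by
  suffices j &&& k % 2 ^ m = j &&& k from congrArg (List.count true ∘ Nat.bits) this
  calc j &&& k % 2 ^ m = j % 2 ^ m &&& k % 2 ^ m := by rw [Nat.mod_eq_of_lt hj]
    _ = (j &&& k) % 2 ^ m := Nat.and_mod_two_pow.symm
    _ = j &&& k := Nat.mod_eq_of_lt (Nat.and_le_left.trans_lt hj)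

theorem sum_range_two_mul_eq_sum_even_add_odd {M : Type*} [AddCommMonoid M] (f : ℕ → M)
    (n : ℕ) : ∑ j ∈ range (2 * n), f j = ∑ q ∈ range n, (f (2 * q) + f (2 * q + 1)) := by
  induction n with
  | zero => simp
  | succ n ih =>
    rw [Nat.mul_succ, sum_range_succ, sum_range_succ, sum_range_succ, ih, add_assoc]

theorem sum_neg_one_pow_bitOverlap_mul_eq_zero {R : Type*} [CommRing R] {N r s : ℕ}
    (hr : r < 2 ^ N) (hs : s < 2 ^ N) (hrs : r ≠ s) :
    ∑ j ∈ range (2 ^ N), (-1 : R) ^ bitOverlap j r * (-1) ^ bitOverlap j s = 0 := by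
  induction N generalizing r s with
  | zero => simp_all
  | succ N ih =>
    have hpair : ∀ q, (-1 : R) ^ bitOverlap (2 * q) r * (-1) ^ bitOverlap (2 * q) s +
          (-1) ^ bitOverlap (2 * q + 1) r * (-1) ^ bitOverlap (2 * q + 1) s =
        (1 + (-1) ^ (r.bodd.toNat + s.bodd.toNat)) *
          ((-1) ^ bitOverlap q r.div2 * (-1) ^ bitOverlap q s.div2) := by
      intro q
      rw [← Nat.bit_true_apply, ← Nat.bit_false_apply]
      simp only [bitOverlap_bit_left, Bool.false_and, Bool.true_and, Bool.toNat_false, zero_add,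
        pow_add]
      ring
    rw [pow_succ', sum_range_two_mul_eq_sum_even_add_odd, sum_congr rfl fun q _ => hpair q,
      ← mul_sum]
    by_cases hdiv : r.div2 = s.div2
    · have hbodd : r.bodd ≠ s.bodd := fun h => hrs <| by
        rw [← Nat.bit_bodd_div2 r, ← Nat.bit_bodd_div2 s, h, hdiv]
      suffices 1 + (-1 : R) ^ (r.bodd.toNat + s.bodd.toNat) = 0 by rw [this, zero_mul]
      cases hr' : r.bodd <;> cases hs' : s.bodd <;> simp_all
    · rw [pow_succ] at hr hs
      rw [ih (by rw [Nat.div2_val]; omega) (by rw [Nat.div2_val]; omega) hdiv, mul_zero]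

theorem sum_Ico_neg_one_pow_bitOverlap_mul_eq_zero {R : Type*} [CommRing R] {m n A B : ℕ}
    (hmn : m ≤ n) (hA : A < 2 ^ n) (hB : B < 2 ^ n) (hAB : A % 2 ^ m ≠ B % 2 ^ m) :
    ∑ j ∈ Ico (2 ^ m) (2 ^ n), (-1 : R) ^ bitOverlap j A * (-1) ^ bitOverlap j B = 0 := by
  have hfull := sum_neg_one_pow_bitOverlap_mul_eq_zero (R := R) hA hB
    fun h => hAB (congrArg (· % 2 ^ m) h)
  have hhead := sum_neg_one_pow_bitOverlap_mul_eq_zero (R := R)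
    (Nat.mod_lt A (by positivity)) (Nat.mod_lt B (by positivity)) hAB
  rw [sum_congr rfl fun j hj => by
    rw [bitOverlap_mod_two_pow_right (mem_range.1 hj),
      bitOverlap_mod_two_pow_right (mem_range.1 hj)]] at hhead
  rw [sum_Ico_eq_sub _ (Nat.pow_le_pow_right two_pos hmn), hfull, hhead, sub_zero]

theorem sum_Ico_neg_one_pow_bitOverlap_mul_self {R : Type*} [CommRing R] {m n : ℕ}
    (hmn : m ≤ n) (A : ℕ) :
    ∑ j ∈ Ico (2 ^ m) (2 ^ n), (-1 : R) ^ bitOverlap j A * (-1) ^ bitOverlap j A =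
      2 ^ n - 2 ^ m := by
  simp only [← mul_pow, neg_one_mul, neg_neg, one_pow, sum_const, Nat.card_Ico, nsmul_one]
  rw [Nat.cast_sub (Nat.pow_le_pow_right two_pos hmn)]
  push_cast
  rfl

theorem mul_two_pow_add_lt_two_pow {m n i r : ℕ} (hmn : m ≤ n) (hi : i < 2 ^ (n - m))
    (hr : r < 2 ^ m) : i * 2 ^ m + r < 2 ^ n :=
  calc i * 2 ^ m + r < (i + 1) * 2 ^ m := by rw [add_one_mul]; omega
    _ ≤ 2 ^ (n - m) * 2 ^ m := Nat.mul_le_mul_right _ hi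
    _ = 2 ^ n := by rw [← pow_add, Nat.sub_add_cancel hmn]

/-- For each `i`, the normalized truncated columns `e i r` of the Sylvester
matrix form an orthonormal family, so `W_i = span {e i r}` has dimension `2^m`. -/
theorem stmt_11 (n m : ℕ) (hmn : m < n)
    (e : Fin (2 ^ (n - m)) → Fin (2 ^ m) → EuclideanSpace ℝ (Fin (2 ^ n - 2 ^ m)))
    (he : ∀ (i : Fin (2 ^ (n - m))) (r : Fin (2 ^ m)) (j : Fin (2 ^ n - 2 ^ m)),
      e i r j = (1 / Real.sqrt ((2 ^ n : ℝ) - 2 ^ m)) *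
        (-1 : ℝ) ^ bitOverlap (j.val + 2 ^ m) (i.val * 2 ^ m + r.val)) :
    ∀ i : Fin (2 ^ (n - m)),
      Orthonormal ℝ (e i) ∧
        Module.finrank ℝ ↥(Submodule.span ℝ (Set.range (e i))) = 2 ^ m := by
  intro i
  set A : Fin (2 ^ m) → ℕ := fun r => i.val * 2 ^ m + r.val
  have hdim : (0 : ℝ) < 2 ^ n - 2 ^ m := sub_pos.2 (pow_lt_pow_right₀ one_lt_two hmn)
  have hinner : ∀ r s, ⟪e i r, e i s⟫_ℝ = ((2 : ℝ) ^ n - 2 ^ m)⁻¹ *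
      ∑ j ∈ Ico (2 ^ m) (2 ^ n), (-1 : ℝ) ^ bitOverlap j (A r) * (-1) ^ bitOverlap j (A s) := by
    intro r s
    rw [← Real.mul_self_sqrt hdim.le, mul_inv, sum_Ico_eq_sum_range,
      sum_range, mul_sum, PiLp.inner_apply]
    refine sum_congr rfl fun j _ => ?_
    rw [Real.inner_apply, he, he, add_comm]
    ring
  have hon : Orthonormal ℝ (e i) := by
    refine orthonormal_iff_ite.2 fun r s => ?_
    rw [hinner]
    split_ifs with hrs
    · rw [hrs, sum_Ico_neg_one_pow_bitOverlap_mul_self hmn.le, inv_mul_cancel₀ hdim.ne']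
    · have hA : ∀ r, A r < 2 ^ n := fun r => mul_two_pow_add_lt_two_pow hmn.le i.isLt r.isLt
      rw [sum_Ico_neg_one_pow_bitOverlap_mul_eq_zero hmn.le (hA r) (hA s), mul_zero]
      simpa [A, Nat.mod_eq_of_lt r.isLt, Nat.mod_eq_of_lt s.isLt, Fin.val_inj]
  exact ⟨hon, by rw [finrank_span_eq_card hon.linearIndependent, Fintype.card_fin]⟩
end
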